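/- arXiv:2101.12655 — 2 statements merged into one kernel-verified Lean document; each statement's English description precedes it below -/
import Mathlib

section
/- Let R = ℤ_(3)[a₂, a₄] be a polynomial ring over the localization of ℤ at 3, and let C = R[r]/(r³ + a₂r² + a₄r). Then the sequence of C-modules ... → C --·(r²+a₂r+a₄)--> C --·r--> C → R → 0, where the last map is the R-algebra map sending r to 0, is exact; i.e., it is a free resolution of R as a C-module, with the pattern of multiplication by r and by r²+a₂r+a₄ alternating. -/
open MvPolynomial

instance : (Ideal.span {(3 : ℤ)}).IsPrime :=
  (Ideal.span_singleton_prime (by norm_num)).mpr Int.prime_three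

/-- `ℤ` localized at the prime `3`. -/
noncomputable abbrev Zloc3 : Type :=
  Localization.AtPrime (R := ℤ) (Ideal.span {(3 : ℤ)})

/-- `R = ℤ₍₃₎[a₂,a₄]`. -/
noncomputable abbrev Rring : Type := MvPolynomial (Fin 2) Zloc3

/-- the relation `r³ + a₂r² + a₄r`, with `a₂ = X 0`, `a₄ = X 1`, `r = X 2`. -/
noncomputable abbrev rel : MvPolynomial (Fin 3) Zloc3 :=
  (X 2) ^ 3 + X 0 * (X 2) ^ 2 + X 1 * X 2

/-- `C = ℤ₍₃₎[a₂,a₄,r]/(r³ + a₂r² + a₄r)`. -/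
noncomputable abbrev Cring : Type :=
  MvPolynomial (Fin 3) Zloc3 ⧸ Ideal.span {rel}

noncomputable abbrev cmk : MvPolynomial (Fin 3) Zloc3 →+* Cring :=
  Ideal.Quotient.mk _

/-- The augmentation `C → R`, the `ℤ₍₃₎`-algebra map sending `r ↦ 0`,
`a₂ ↦ a₂`, `a₄ ↦ a₄`. -/
noncomputable def aug : Cring →+* Rring :=
  Ideal.Quotient.lift _
    ((aeval (R := Zloc3) ![(X 0 : Rring), X 1, 0]).toRingHom)
    (by
      intro a ha
      rw [Ideal.mem_span_singleton] at ha
      obtain ⟨c, rfl⟩ := ha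
      simp [rel])

/-
The relation factors as `r · (r² + a₂r + a₄)` with both factors nonzero in the domain
`ℤ₍₃₎[a₂,a₄,r]`. In the quotient of a domain by `g · h`, the annihilator of `g` is `(h)`:
`p g = g h c` gives `p = h c` after cancelling `g`. For the augmentation, the inclusion
`ℤ₍₃₎[a₂,a₄] → ℤ₍₃₎[a₂,a₄,r]` is a section, and `p` differs from its image under augmentation
followed by inclusion by an element of `(r)`; hence the kernel is `(r)`.
-/

theorem Ideal.Quotient.mul_mk_eq_zero_iff_mem_span {A : Type*} [CommRing A] [IsDomain A]
    {f g h : A} (hf : f = g * h) (hg : g ≠ 0) (x : A ⧸ Ideal.span {f}) :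
    x * Ideal.Quotient.mk _ g = 0 ↔ x ∈ Ideal.span {Ideal.Quotient.mk _ h} := by
  obtain ⟨p, rfl⟩ := Ideal.Quotient.mk_surjective x
  rw [← map_mul, Ideal.Quotient.eq_zero_iff_mem, Ideal.mem_span_singleton,
    Ideal.mem_span_singleton]
  constructor
  · rintro ⟨c, hc⟩
    have hp : p = h * c := mul_right_cancel₀ hg (by rw [hc, hf]; ring)
    exact ⟨Ideal.Quotient.mk _ c, by rw [hp, map_mul]⟩
  · rintro ⟨c, hc⟩
    obtain ⟨c, rfl⟩ := Ideal.Quotient.mk_surjective c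
    rw [← map_mul, Ideal.Quotient.eq] at hc
    obtain ⟨d, hd⟩ := Ideal.mem_span_singleton.1 hc
    exact ⟨g * d + c, by linear_combination g * hd - c * hf⟩

theorem RingHom.ker_eq_of_sub_mem {A B : Type*} [CommRing A] [CommRing B] (f : A →+* B)
    (s : B →+* A) (I : Ideal A) (hI : I ≤ RingHom.ker f) (hs : ∀ a, a - s (f a) ∈ I) :
    RingHom.ker f = I := by
  refine le_antisymm (fun a ha => ?_) hI
  simpa [RingHom.mem_ker.1 ha] using hs a

noncomputable abbrev evalAtRZero : MvPolynomial (Fin 3) Zloc3 →ₐ[Zloc3] Rring :=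
  aeval ![X 0, X 1, 0]

noncomputable abbrev ofRring : Rring →ₐ[Zloc3] MvPolynomial (Fin 3) Zloc3 :=
  aeval ![X 0, X 1]

theorem evalAtRZero_ofRring (y : Rring) : evalAtRZero (ofRring y) = y := by
  suffices evalAtRZero.comp ofRring = AlgHom.id Zloc3 Rring from DFunLike.congr_fun this y
  apply MvPolynomial.algHom_ext
  intro i
  fin_cases i <;> simp

theorem sub_ofRring_evalAtRZero_mem (p : MvPolynomial (Fin 3) Zloc3) :
    p - ofRring (evalAtRZero p) ∈ Ideal.span {X 2} := by
  rw [← Ideal.Quotient.eq]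
  suffices (Ideal.Quotient.mk _).comp (ofRring.toRingHom.comp evalAtRZero.toRingHom) =
      Ideal.Quotient.mk (Ideal.span {(X 2 : MvPolynomial (Fin 3) Zloc3)}) from
    (DFunLike.congr_fun this p).symm
  apply MvPolynomial.ringHom_ext
  · intro c
    simp
  · intro i
    fin_cases i <;> simp

theorem ker_evalAtRZero :
    RingHom.ker evalAtRZero.toRingHom = Ideal.span {X 2} := by
  refine RingHom.ker_eq_of_sub_mem _ ofRring.toRingHom _ ?_ sub_ofRring_evalAtRZero_mem
  rw [Ideal.span_le]
  rintro _ rfl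
  simp [RingHom.mem_ker]

theorem rel_eq_mul : rel = X 2 * ((X 2) ^ 2 + X 0 * X 2 + X 1) := by ring

theorem cofactor_ne_zero : ((X 2) ^ 2 + X 0 * X 2 + X 1 : MvPolynomial (Fin 3) Zloc3) ≠ 0 := by
  intro h
  simpa using congrArg (eval ![0, 1, 0]) h

/-- The sequence `⋯ → C →(·(r²+a₂r+a₄)) C →(·r) C → R → 0` is exact: the
augmentation is surjective with kernel the ideal `(r)`, the annihilator of `r`
in `C` is the ideal `(r² + a₂r + a₄)`, and the annihilator of `r² + a₂r + a₄`
is the ideal `(r)`; so this 2-periodic sequence is a free resolution of `R`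
as a `C`-module. -/
theorem stmt3 :
    Function.Surjective aug ∧
    RingHom.ker aug = Ideal.span {cmk (X 2)} ∧
    (∀ x : Cring, x * cmk (X 2) = 0 ↔
      x ∈ Ideal.span {cmk ((X 2) ^ 2 + X 0 * X 2 + X 1)}) ∧
    (∀ x : Cring, x * cmk ((X 2) ^ 2 + X 0 * X 2 + X 1) = 0 ↔
      x ∈ Ideal.span {cmk (X 2)}) := by
  refine ⟨fun y => ⟨cmk (ofRring y), evalAtRZero_ofRring y⟩, ?_,
    Ideal.Quotient.mul_mk_eq_zero_iff_mem_span rel_eq_mul (X_ne_zero 2),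
    Ideal.Quotient.mul_mk_eq_zero_iff_mem_span (rel_eq_mul.trans (mul_comm _ _))
      cofactor_ne_zero⟩
  have ker_aug : RingHom.ker aug = (RingHom.ker evalAtRZero.toRingHom).map cmk :=
    Ideal.ker_quotient_lift _ _
  rw [ker_aug, ker_evalAtRZero, Ideal.map_span, Set.image_singleton]
end

section
/- In the graded ring E = 𝔽₂[a₁, a₃][ζ^{±1}] with a derivation d of degree −1 satisfying d(a₁a₃) = 0, d(a₁²) = a₁³ζ³, d(a₃²) = a₁a₃²ζ³, d(a₃ζ) = a₁a₃ζ⁴, d(a₁ζ) = 0, d(ζ²) = a₁ζ⁵ (extended by the Leibniz rule to the even-weight subring), the homology of the even-weight part is the 𝔽₂-vector space spanned by the classes d_{0,m,i} = (a₃²)^m ζ^{2i} with m + i ≡ 0 (mod 2) and g_{0,m,i} = (a₃²)^m (a₃ζ) ζ^{2i} with m + i + 1 ≡ 0 (mod 2). -/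
/-!
`D` is monomial: it sends the basis vector indexed by `b` to `coeff b` times the one indexed by
`target b`, with `target` injective. Hence `ker D` is spanned by the basis vectors with
`coeff b = 0` and `im D` by those indexed by `target b` with `coeff b ≠ 0`. Since
`coeff (target b) = coeff b + 1`, a basis vector in the range of `target` lies in the kernel
exactly when it is hit by `D`. The basis vectors outside the range of `target` are the
`d_{0,m,i}` and `g_{0,m,i}`, and those among them with `coeff = 0` form the homology basis.
-/

noncomputable section

/-- The even-weight part of `𝔽₂[a₁,a₃][ζ^{±1}]`, as the free `𝔽₂`-module on the
basis `d_{n,m,i} = (a₁²)ⁿ(a₃²)^m ζ^{2i}`, `e_{n,m,i} = (a₁²)ⁿ(a₁a₃)(a₃²)^m ζ^{2i}`,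
`f_{n,m,i} = (a₁²)ⁿ(a₃²)^m(a₁ζ)ζ^{2i}`, `g_{n,m,i} = (a₁²)ⁿ(a₃²)^m(a₃ζ)ζ^{2i}`,
indexed by `Fin 4 × ℕ × ℕ × ℤ` (first component `0,1,2,3` for `d,e,f,g`). -/
abbrev V16 : Type := (Fin 4 × ℕ × ℕ × ℤ) →₀ ZMod 2

/-- The differential on basis elements: `d(d_{n,m,i}) = (n+m+i)·f_{n,m,i+1}`,
`d(e_{n,m,i}) = (n+m+i)·g_{n+1,m,i+1}`, `d(f_{n,m,i}) = (n+m+i)·d_{n+1,m,i+2}`,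
`d(g_{n,m,i}) = (n+m+i+1)·e_{n,m,i+2}`, coefficients taken in `𝔽₂`. -/
def Dbasis : Fin 4 × ℕ × ℕ × ℤ → V16 := fun x =>
  match x with
  | (0, n, m, i) => (((n : ℤ) + m + i : ℤ) : ZMod 2) • Finsupp.single (2, n, m, i + 1) 1
  | (1, n, m, i) => (((n : ℤ) + m + i : ℤ) : ZMod 2) • Finsupp.single (3, n + 1, m, i + 1) 1
  | (2, n, m, i) => (((n : ℤ) + m + i : ℤ) : ZMod 2) • Finsupp.single (0, n + 1, m, i + 2) 1
  | (3, n, m, i) => (((n : ℤ) + m + i + 1 : ℤ) : ZMod 2) • Finsupp.single (1, n, m, i + 2) 1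

/-- The differential `D` (the `d³`-differential of the Tate spectral sequence for
`tmf₁(3)` on the even-weight part), extended `𝔽₂`-linearly from `Dbasis`. -/
def D16 : V16 →ₗ[ZMod 2] V16 := Finsupp.linearCombination (ZMod 2) Dbasis

/-- The proposed homology classes: `d_{0,m,i} = (a₃²)^m ζ^{2i}` with `m + i ≡ 0 (mod 2)`
and `g_{0,m,i} = (a₃²)^m (a₃ζ) ζ^{2i}` with `m + i + 1 ≡ 0 (mod 2)`. -/
def homBasis16 : Set V16 :=
  {v | ∃ (m : ℕ) (i : ℤ), Even ((m : ℤ) + i) ∧ v = Finsupp.single (0, 0, m, i) 1} ∪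
  {v | ∃ (m : ℕ) (i : ℤ), Even ((m : ℤ) + i + 1) ∧ v = Finsupp.single (3, 0, m, i) 1}

namespace Finsupp

section MonomialMap

variable {R ι κ : Type*} (c : ι → R) {τ : ι → κ}

theorem linearCombination_smul_single_apply_of_injective [Semiring R] (hτ : τ.Injective)
    (v : ι →₀ R) (b : ι) :
    linearCombination R (fun a ↦ c a • single (τ a) (1 : R)) v (τ b) = v b * c b := by
  rw [linearCombination_apply, sum_apply, sum]
  refine (Finset.sum_eq_single b (fun a _ hab ↦ ?_) (fun hb ↦ ?_)).trans ?_
  · simp [hτ.ne hab]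
  · simp [notMem_support_iff.mp hb]
  · simp

theorem ker_linearCombination_smul_single [Semiring R] [NoZeroDivisors R] (hτ : τ.Injective) :
    LinearMap.ker (linearCombination R fun a ↦ c a • single (τ a) (1 : R)) =
      supported R R {b | c b = 0} := by
  ext v
  rw [LinearMap.mem_ker, mem_supported]
  constructor
  · intro hv b hb
    have hvb := linearCombination_smul_single_apply_of_injective c hτ v b
    rw [hv, coe_zero, Pi.zero_apply, eq_comm, mul_eq_zero] at hvb
    exact hvb.resolve_left (mem_support_iff.mp hb)
  · intro hv
    rw [linearCombination_apply, sum]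
    exact Finset.sum_eq_zero fun b hb ↦ by rw [show c b = 0 from hv hb, zero_smul, smul_zero]

theorem range_linearCombination_smul_single [DivisionRing R] :
    LinearMap.range (linearCombination R fun a ↦ c a • single (τ a) (1 : R)) =
      supported R R (τ '' {b | c b ≠ 0}) := by
  rw [range_linearCombination, supported_eq_span_single]
  apply le_antisymm
  · rw [Submodule.span_le]
    rintro _ ⟨b, rfl⟩
    rcases eq_or_ne (c b) 0 with hb | hb
    · simp [hb]
    · exact Submodule.smul_mem _ _ (Submodule.subset_span ⟨τ b, ⟨b, hb, rfl⟩, rfl⟩)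
  · rw [Submodule.span_le]
    rintro _ ⟨_, ⟨b, hb, rfl⟩, rfl⟩
    change single (τ b) (1 : R) ∈ _
    rw [← inv_smul_smul₀ hb (single (τ b) (1 : R))]
    exact Submodule.smul_mem _ _ (Submodule.subset_span ⟨b, rfl⟩)

end MonomialMap

end Finsupp

namespace D16

abbrev Index : Type := Fin 4 × ℕ × ℕ × ℤ

def coeff : Index → ZMod 2
  | (3, n, m, i) => ((n + m + i + 1 : ℤ) : ZMod 2)
  | (_, n, m, i) => ((n + m + i : ℤ) : ZMod 2)

def target : Index → Index
  | (0, n, m, i) => (2, n, m, i + 1)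
  | (1, n, m, i) => (3, n + 1, m, i + 1)
  | (2, n, m, i) => (0, n + 1, m, i + 2)
  | (3, n, m, i) => (1, n, m, i + 2)

theorem Dbasis_eq_smul_single (b : Index) : Dbasis b = coeff b • Finsupp.single (target b) 1 := by
  obtain ⟨k, n, m, i⟩ := b
  fin_cases k <;> rfl

theorem target_injective : target.Injective := by
  rintro ⟨k, n, m, i⟩ ⟨k', n', m', i'⟩ h
  fin_cases k <;> fin_cases k' <;> simp_all [target, Prod.ext_iff]

theorem coeff_target (b : Index) : coeff (target b) = coeff b + 1 := by
  obtain ⟨k, n, m, i⟩ := b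
  fin_cases k <;> simp only [coeff, target] <;> push_cast <;> ring_nf <;> reduce_mod_char

theorem notMem_range_target_iff (b : Index) :
    b ∉ Set.range target ↔ ∃ m i, b = (0, 0, m, i) ∨ b = (3, 0, m, i) := by
  constructor
  · obtain ⟨k, n, m, i⟩ := b
    intro hb
    fin_cases k
    · cases n with
      | zero => exact ⟨m, i, .inl rfl⟩
      | succ n => exact absurd ⟨(2, n, m, i - 2), by simp [target]⟩ hb
    · exact absurd ⟨(3, n, m, i - 2), by simp [target]⟩ hb
    · exact absurd ⟨(0, n, m, i - 1), by simp [target]⟩ hb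
    · cases n with
      | zero => exact ⟨m, i, .inr rfl⟩
      | succ n => exact absurd ⟨(1, n, m, i - 1), by simp [target]⟩ hb
  · rintro ⟨m, i, rfl | rfl⟩ ⟨⟨k, n, m', i'⟩, h⟩ <;>
      fin_cases k <;> simp [target, Prod.ext_iff] at h

theorem eq_linearCombination :
    D16 = Finsupp.linearCombination (ZMod 2) fun b ↦ coeff b • Finsupp.single (target b) 1 :=
  congrArg _ (funext Dbasis_eq_smul_single)

theorem ker_eq_supported : LinearMap.ker D16 = Finsupp.supported _ _ {b | coeff b = 0} := by
  rw [eq_linearCombination, Finsupp.ker_linearCombination_smul_single _ target_injective]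

theorem range_eq_supported :
    LinearMap.range D16 = Finsupp.supported _ _ (target '' {b | coeff b ≠ 0}) := by
  rw [eq_linearCombination, Finsupp.range_linearCombination_smul_single]

def homologyIndex : Set Index := {b | coeff b = 0 ∧ b ∉ Set.range target}

theorem setOf_coeff_eq_zero :
    {b | coeff b = 0} = target '' {b | coeff b ≠ 0} ∪ homologyIndex := by
  have add_one_eq_zero_iff : ∀ x : ZMod 2, x + 1 = 0 ↔ x ≠ 0 := by decide
  ext b
  by_cases hb : b ∈ Set.range target
  · obtain ⟨a, rfl⟩ := hb
    simp only [homologyIndex, Set.mem_union, Set.mem_ofPred_eq, target_injective.mem_set_image,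
      coeff_target, add_one_eq_zero_iff, Set.mem_range_self, not_true_eq_false, and_false, or_false]
  · have hb' : b ∉ target '' {b | coeff b ≠ 0} := fun h ↦ hb (Set.image_subset_range _ _ h)
    simp only [homologyIndex, Set.mem_union, Set.mem_ofPred_eq, hb, hb', not_false_eq_true,
      and_true, false_or]

theorem disjoint_homologyIndex_image_target :
    Disjoint homologyIndex (target '' {b | coeff b ≠ 0}) :=
  Set.disjoint_left.mpr fun _ hb hT ↦ hb.2 (Set.image_subset_range _ _ hT)

theorem homBasis16_eq_image : homBasis16 = (Finsupp.single · 1) '' homologyIndex := by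
  have coeff_d : ∀ (m : ℕ) (i : ℤ), coeff (0, 0, m, i) = 0 ↔ Even ((m : ℤ) + i) := by
    simp only [coeff, Nat.cast_zero, zero_add, ZMod.intCast_eq_zero_iff_even, implies_true]
  have coeff_g : ∀ (m : ℕ) (i : ℤ), coeff (3, 0, m, i) = 0 ↔ Even ((m : ℤ) + i + 1) := by
    simp only [coeff, Nat.cast_zero, zero_add, ZMod.intCast_eq_zero_iff_even, implies_true]
  ext v
  simp only [homBasis16, homologyIndex, Set.mem_image, Set.mem_union, notMem_range_target_iff]
  constructor
  · rintro (⟨m, i, he, rfl⟩ | ⟨m, i, he, rfl⟩)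
    · exact ⟨(0, 0, m, i), ⟨(coeff_d m i).2 he, m, i, .inl rfl⟩, rfl⟩
    · exact ⟨(3, 0, m, i), ⟨(coeff_g m i).2 he, m, i, .inr rfl⟩, rfl⟩
  · rintro ⟨b, ⟨hc, m, i, rfl | rfl⟩, rfl⟩
    · exact .inl ⟨m, i, (coeff_d m i).1 hc, rfl⟩
    · exact .inr ⟨m, i, (coeff_g m i).1 hc, rfl⟩

theorem span_homBasis16_eq_supported :
    Submodule.span (ZMod 2) homBasis16 = Finsupp.supported _ _ homologyIndex := by
  rw [homBasis16_eq_image, Finsupp.supported_eq_span_single]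

end D16

/-- The homology `ker D / im D` of the differential `D` on the even-weight part of
`𝔽₂[a₁,a₃][ζ^{±1}]` is the `𝔽₂`-vector space with basis the classes of the
`d_{0,m,i}` with `m+i ≡ 0 (mod 2)` and the `g_{0,m,i}` with `m+i+1 ≡ 0 (mod 2)`:
these elements are linearly independent, their span meets the image of `D`
trivially, and together with the image of `D` they span the kernel of `D`. -/
theorem stmt16 :
    LinearMap.ker D16 = LinearMap.range D16 ⊔ Submodule.span (ZMod 2) homBasis16 ∧
    Disjoint (Submodule.span (ZMod 2) homBasis16) (LinearMap.range D16) ∧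
    LinearIndependent (ZMod 2) ((↑) : homBasis16 → V16) := by
  refine ⟨?_, ?_, ?_⟩
  · rw [D16.ker_eq_supported, D16.range_eq_supported, D16.span_homBasis16_eq_supported,
      D16.setOf_coeff_eq_zero, Finsupp.supported_union]
  · rw [D16.span_homBasis16_eq_supported, D16.range_eq_supported]
    exact Finsupp.disjoint_supported_supported D16.disjoint_homologyIndex_image_target
  · rw [D16.homBasis16_eq_image]
    exact (Finsupp.linearIndependent_single_one _ _).linearIndepOn_id.mono
      (Set.image_subset_range _ _)

end
end
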